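/- Let p ≥ 1 be an integer and let x ≥ 0 be real. Then ∑_{n=1}^{2^p−1} s_2(n)/((x+n)(x+n+1)) = ∑_{l=0}^{p−1} 2^{−l}·[β(x/2^l + 1) − β(x/2^l + 2^{p−l} + 1)], where β(y) = (1/2)·[ψ((y+1)/2) − ψ(y/2)] is Stirling's beta function. -/

import Mathlib

/-- Number of ones in the binary expansion of `n` (sum of base-2 digits). -/
def s2 (n : ℕ) : ℕ := (Nat.digits 2 n).sum

/-- The digamma function `ψ(x) = Γ'(x)/Γ(x)`. -/
noncomputable def digamma (x : ℝ) : ℝ := deriv Real.Gamma x / Real.Gamma x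

/-- Stirling's beta function `β(y) = (ψ((y+1)/2) - ψ(y/2))/2`. -/
noncomputable def stirlingBeta (y : ℝ) : ℝ :=
  (1 / 2) * (digamma ((y + 1) / 2) - digamma (y / 2))

/-! Write `s₂(n) = ∑_l ⌊n / 2^l⌋ mod 2`. The `n < 2^p` whose `l`-th bit is set form the blocks
`[2^(l+1) k + 2^l, 2^(l+1) (k+1))`, on which `1/((x+n)(x+n+1))` telescopes to
`2^(-l) / ((y+2k)(y+2k+1))` with `y = x/2^l + 1`. The functional equation `ψ(z+1) = ψ(z) + 1/z`
gives `β(y) - β(y+2) = 1/(y(y+1))`, so the sum over `k` telescopes once more, to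
`2^(-l) (β(y) - β(y + 2^(p-l)))`. -/

open Finset

lemma digamma_add_one {x : ℝ} (hx : ∀ m : ℕ, x ≠ -m) : digamma (x + 1) = digamma x + 1 / x := by
  have hx0 : x ≠ 0 := by simpa using hx 0
  have hx1 : ∀ m : ℕ, x + 1 ≠ -m := fun m h => hx (m + 1) (by push_cast; linarith)
  have hΓ : (fun y => Real.Gamma (y + 1)) =ᶠ[nhds x] fun y => y * Real.Gamma y := by
    filter_upwards [isOpen_ne.mem_nhds hx0] with y hy using Real.Gamma_add_one hy
  calc digamma (x + 1) = logDeriv (Real.Gamma ∘ (· + 1)) x := by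
        rw [logDeriv_comp (g := (· + 1)) (Real.differentiableAt_Gamma hx1)
          (differentiableAt_id.add_const 1)]
        simp [digamma, logDeriv_apply]
    _ = logDeriv id x + logDeriv Real.Gamma x := by
        rw [Function.comp_def, (logDeriv_congr_nhds hΓ).eq_of_nhds]
        exact logDeriv_mul x hx0 (Real.Gamma_ne_zero hx) differentiableAt_id
          (Real.differentiableAt_Gamma hx)
    _ = digamma x + 1 / x := by rw [logDeriv_id, add_comm]; rfl

lemma stirlingBeta_sub_stirlingBeta_add_two {y : ℝ} (hy : 0 < y) :
    stirlingBeta y - stirlingBeta (y + 2) = 1 / (y * (y + 1)) := by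
  have hpos {z : ℝ} (hz : 0 < z) : ∀ m : ℕ, z ≠ -m := fun m h => by
    have : (0 : ℝ) ≤ m := m.cast_nonneg
    linarith
  have h1 : (y + 2 + 1) / 2 = (y + 1) / 2 + 1 := by ring
  have h2 : (y + 2) / 2 = y / 2 + 1 := by ring
  rw [stirlingBeta, stirlingBeta, h1, h2, digamma_add_one (hpos (by positivity)),
    digamma_add_one (hpos (by positivity))]
  field_simp
  ring

lemma stirlingBeta_sub_stirlingBeta_add_two_mul (m : ℕ) {y : ℝ} (hy : 0 < y) :
    stirlingBeta y - stirlingBeta (y + 2 * m) =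
      ∑ k ∈ range m, 1 / ((y + 2 * k) * (y + 2 * k + 1)) := by
  have h := sum_range_sub' (fun k : ℕ => stirlingBeta (y + 2 * k)) m
  simp only [Nat.cast_zero, mul_zero, add_zero] at h
  rw [← h]
  refine sum_congr rfl fun k _ => ?_
  rw [← stirlingBeta_sub_stirlingBeta_add_two (by positivity)]
  push_cast
  ring_nf

lemma sum_range_one_div_mul_add_one (c : ℕ) {t : ℝ} (ht : 0 < t) :
    ∑ j ∈ range c, 1 / ((t + j) * (t + j + 1)) = 1 / t - 1 / (t + c) := by
  have h := sum_range_sub' (fun j : ℕ => 1 / (t + j)) c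
  simp only [Nat.cast_zero, add_zero] at h
  rw [← h]
  refine sum_congr rfl fun j _ => ?_
  have : 0 < t + j := by positivity
  push_cast
  field_simp
  ring

lemma s2_eq_sum_range_div_pow_mod_two {p n : ℕ} (hn : n < 2 ^ p) :
    s2 n = ∑ l ∈ range p, n / 2 ^ l % 2 := by
  induction p generalizing n with
  | zero => simp [s2, Nat.lt_one_iff.mp hn]
  | succ q ih =>
    rcases Nat.eq_zero_or_pos n with rfl | hpos
    · simp [s2]
    · have hdigits : s2 n = n % 2 + s2 (n / 2) := by
        rw [s2, s2, Nat.digits_def' one_lt_two hpos, List.sum_cons]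
      rw [hdigits, ih (by omega), sum_range_succ', pow_zero, Nat.div_one, add_comm]
      congr 1
      refine sum_congr rfl fun l _ => ?_
      rw [pow_succ', Nat.div_div_eq_div_mul]

lemma sum_range_div_mod_two_smul {M : Type*} [AddCommMonoid M] (b m : ℕ) (f : ℕ → M) :
    ∑ n ∈ range (2 * b * m), (n / b % 2) • f n =
      ∑ k ∈ range m, ∑ j ∈ range b, f (2 * b * k + b + j) := by
  induction m with
  | zero => simp
  | succ m ih =>
    rw [Nat.mul_succ, sum_range_add, ih, sum_range_succ]
    congr 1
    have hdiv {r : ℕ} (hb : 0 < b) : (2 * b * m + r) / b % 2 = r / b % 2 := by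
      rw [show 2 * b * m + r = r + b * (2 * m) by ring, Nat.add_mul_div_left _ _ hb,
        Nat.add_mul_mod_self_left]
    rw [two_mul b, sum_range_add, ← two_mul]
    have hlow : ∑ r ∈ range b, ((2 * b * m + r) / b % 2) • f (2 * b * m + r) = 0 :=
      sum_eq_zero fun r hr => by
        have hr := mem_range.mp hr
        rw [hdiv (by omega), Nat.div_eq_of_lt hr, Nat.zero_mod, zero_smul]
    rw [hlow, zero_add]
    refine sum_congr rfl fun j hj => ?_
    have hj := mem_range.mp hj
    rw [hdiv (by omega), Nat.add_div_left _ (by omega), Nat.div_eq_of_lt hj, zero_add, Nat.one_mod, one_smul, add_assoc]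

lemma sum_range_div_pow_mod_two_mul_one_div {x : ℝ} (hx : 0 ≤ x) (l m : ℕ) :
    ∑ n ∈ range (2 * 2 ^ l * m), ((n / 2 ^ l % 2 : ℕ) : ℝ) * (1 / ((x + n) * (x + n + 1))) =
      (2 ^ l)⁻¹ * (stirlingBeta (x / 2 ^ l + 1) - stirlingBeta (x / 2 ^ l + 1 + 2 * m)) := by
  simp_rw [← nsmul_eq_mul]
  rw [sum_range_div_mod_two_smul, stirlingBeta_sub_stirlingBeta_add_two_mul _ (by positivity),
    mul_sum]
  refine sum_congr rfl fun k _ => ?_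
  set t : ℝ := x + 2 * 2 ^ l * k + 2 ^ l
  have ht : 0 < t := by positivity
  calc ∑ j ∈ range (2 ^ l), 1 / ((x + ((2 * 2 ^ l * k + 2 ^ l + j : ℕ) : ℝ)) *
          (x + ((2 * 2 ^ l * k + 2 ^ l + j : ℕ) : ℝ) + 1))
      = 1 / t - 1 / (t + (2 ^ l : ℕ)) := by
        rw [← sum_range_one_div_mul_add_one _ ht]
        refine sum_congr rfl fun j _ => ?_
        push_cast
        ring
    _ = _ := by
        push_cast
        field_simp
        ring

theorem stmt5_general (p : ℕ) (x : ℝ) (hx : 0 ≤ x) :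
    ∑ n ∈ Finset.Icc 1 (2 ^ p - 1),
      (s2 n : ℝ) / ((x + n) * (x + n + 1)) =
    ∑ l ∈ Finset.range p, ((2 : ℝ) ^ l)⁻¹ *
      (stirlingBeta (x / 2 ^ l + 1) - stirlingBeta (x / 2 ^ l + 2 ^ (p - l) + 1)) := by
  have hrange : range (2 ^ p) = insert 0 (Icc 1 (2 ^ p - 1)) := by
    ext n
    simp only [mem_range, mem_insert, mem_Icc]
    have := Nat.one_le_two_pow (n := p)
    omega
  calc ∑ n ∈ Icc 1 (2 ^ p - 1), (s2 n : ℝ) / ((x + n) * (x + n + 1))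
      = ∑ n ∈ range (2 ^ p), (s2 n : ℝ) * (1 / ((x + n) * (x + n + 1))) := by
        simp [hrange, s2, div_eq_mul_inv]
    _ = ∑ l ∈ range p, ∑ n ∈ range (2 ^ p),
          ((n / 2 ^ l % 2 : ℕ) : ℝ) * (1 / ((x + n) * (x + n + 1))) := by
        rw [sum_comm]
        refine sum_congr rfl fun n hn => ?_
        rw [s2_eq_sum_range_div_pow_mod_two (mem_range.mp hn), Nat.cast_sum, sum_mul]
    _ = _ := by
        refine sum_congr rfl fun l hl => ?_
        obtain ⟨m, rfl⟩ : ∃ m, p = l + 1 + m := ⟨p - (l + 1), by have := mem_range.mp hl; omega⟩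
        have hpow : 2 ^ (l + 1 + m) = 2 * 2 ^ l * 2 ^ m := by ring
        rw [hpow, sum_range_div_pow_mod_two_mul_one_div hx, show l + 1 + m - l = m + 1 by omega]
        push_cast
        ring_nf

theorem stmt5 (p : ℕ) (hp : 1 ≤ p) (x : ℝ) (hx : 0 ≤ x) :
    ∑ n ∈ Finset.Icc 1 (2 ^ p - 1),
      (s2 n : ℝ) / ((x + n) * (x + n + 1)) =
    ∑ l ∈ Finset.range p, ((2 : ℝ) ^ l)⁻¹ *
      (stirlingBeta (x / 2 ^ l + 1) - stirlingBeta (x / 2 ^ l + 2 ^ (p - l) + 1)) :=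
  stmt5_general p x hx
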